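/- Let $p(n) \uparrow \infty$ be an increasing sequence with $p(n) \geq 1$, and let $\Lambda = \{\lambda_n\}$ be a nondecreasing sequence of positive reals with $\lambda_1 > 1$. If the inclusion $BV^{\#}(p(n) \uparrow \infty) \subset \Lambda^{\#}BV$ holds, then $\sum_{n=1}^\infty 1/\lambda_n < \infty$ (equivalently, $\Lambda^{\#}BV$ equals the class of all bounded functions on $[0,1]^2$). -/

import Mathlib

/-- A finite collection of `m` nonoverlapping open subintervals `(a i, b i)` of `[0,1]`. -/
def Nonoverlap (m : ℕ) (a b : ℕ → ℝ) : Prop :=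
  (∀ i < m, 0 ≤ a i ∧ a i < b i ∧ b i ≤ 1) ∧
  ∀ i < m, ∀ j < m, i ≠ j → Set.Ioo (a i) (b i) ∩ Set.Ioo (a j) (b j) = ∅

/-- `Λ^{#}V_1(f) ≤ M`: all Waterman-type sums in the first variable, with a separate
point `y i` for each interval, are bounded by `M`. -/
def LamSharpV1 (lam : ℕ → ℝ) (f : ℝ → ℝ → ℝ) (M : ℝ) : Prop :=
  ∀ (m : ℕ) (a b y : ℕ → ℝ), Nonoverlap m a b → (∀ i < m, y i ∈ Set.Icc (0:ℝ) 1) →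
    ∑ i ∈ Finset.range m, |f (b i) (y i) - f (a i) (y i)| / lam i ≤ M

/-- `Λ^{#}V_2(f) ≤ M`: the symmetric condition in the second variable. -/
def LamSharpV2 (lam : ℕ → ℝ) (f : ℝ → ℝ → ℝ) (M : ℝ) : Prop :=
  ∀ (m : ℕ) (a b x : ℕ → ℝ), Nonoverlap m a b → (∀ i < m, x i ∈ Set.Icc (0:ℝ) 1) →
    ∑ i ∈ Finset.range m, |f (x i) (b i) - f (x i) (a i)| / lam i ≤ M

/-- The class `Λ^{#}BV`. -/
def LamSharpBV (lam : ℕ → ℝ) (f : ℝ → ℝ → ℝ) : Prop :=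
  ∃ M : ℝ, LamSharpV1 lam f M ∧ LamSharpV2 lam f M

/-- `V_1^{#}(f, p(n) ↑ ∞) ≤ M`: for every `n`, every collection of nonoverlapping
intervals of lengths at least `2⁻ⁿ` and every choice of points `y i`, the `ℓ^{p(n)}`
sum of increments in the first variable is at most `M`. -/
def BVSharpV1 (p : ℕ → ℝ) (f : ℝ → ℝ → ℝ) (M : ℝ) : Prop :=
  ∀ (n m : ℕ) (a b y : ℕ → ℝ), Nonoverlap m a b →
    (∀ i < m, 1 / 2 ^ n ≤ b i - a i) →
    (∀ i < m, y i ∈ Set.Icc (0:ℝ) 1) →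
    (∑ i ∈ Finset.range m, |f (b i) (y i) - f (a i) (y i)| ^ p n) ^ (1 / p n) ≤ M

/-- `V_2^{#}(f, p(n) ↑ ∞) ≤ M`: the symmetric condition in the second variable. -/
def BVSharpV2 (p : ℕ → ℝ) (f : ℝ → ℝ → ℝ) (M : ℝ) : Prop :=
  ∀ (n m : ℕ) (a b x : ℕ → ℝ), Nonoverlap m a b →
    (∀ i < m, 1 / 2 ^ n ≤ b i - a i) →
    (∀ i < m, x i ∈ Set.Icc (0:ℝ) 1) →
    (∑ i ∈ Finset.range m, |f (x i) (b i) - f (x i) (a i)| ^ p n) ^ (1 / p n) ≤ M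

/-- The class `BV^{#}(p(n) ↑ ∞)`. -/
def BVSharp (p : ℕ → ℝ) (f : ℝ → ℝ → ℝ) : Prop :=
  ∃ M : ℝ, BVSharpV1 p f M ∧ BVSharpV2 p f M

/-! If `∑ 1/λ_n = ∞`, choose `c n` with `∑_{j < c n} 1/λ_j ≥ 2^(n+1) (n+1)` and `r n ≥ n + 2`
with `p (r n) ≥ c n + 1`. The test function `spikeFun r c` vanishes off the diagonal
`x ≡ y (mod 1)`; on it, it equals `2^-(n+1)` at the `c n` sites of level `n`, a cluster of
diameter `< 2^-(r n)` just right of `2^-(n+1)`, and `0` elsewhere.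

Testing `Λ^{#}V_1` on the `c n` consecutive intervals ending at the level-`n` sites, each at
height `y` equal to its right endpoint, gives `2^-(n+1) ∑_{j < c n} 1/λ_j ≥ n + 1`, so the
function is not in `Λ^{#}BV`. It is in `BV^{#}(p(n) ↑ ∞)`: endpoints of intervals of length
`≥ 2^-k` are `2^-k`-separated, so for `k ≤ r n` they meet the level-`n` cluster at most once,
while for `k ≥ r n` the exponent `p k ≥ c n + 1` makes `c n (2^-(n+1))^(p k) ≤ 2^-(n+1)`.
Either way level `n` contributes at most `2^-(n+1)` to an `ℓ^(p k)` sum, which is therefore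
at most 2. -/

open Finset

section Nonoverlap

variable {m : ℕ} {a b : ℕ → ℝ}

theorem Nonoverlap.le_or_le (h : Nonoverlap m a b) {i j : ℕ} (hi : i < m) (hj : j < m)
    (hij : i ≠ j) : b i ≤ a j ∨ b j ≤ a i := by
  have hdisj : Disjoint (Set.Ioo (a i) (b i)) (Set.Ioo (a j) (b j)) :=
    Set.disjoint_iff_inter_eq_empty.2 (h.2 i hi j hj hij)
  rw [Set.Ioo_disjoint_Ioo, min_le_iff, le_max_iff, le_max_iff] at hdisj
  have := (h.1 i hi).2.1
  have := (h.1 j hj).2.1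
  rcases hdisj with (hb | hb) | (hb | hb)
  all_goals first | exact .inl hb | exact .inr hb | (exfalso; linarith)

theorem Nonoverlap.le_dist (h : Nonoverlap m a b) {δ : ℝ} (hlen : ∀ i < m, δ ≤ b i - a i)
    {i j : ℕ} (hi : i < m) (hj : j < m) (hij : i ≠ j) :
    δ ≤ dist (a i) (a j) ∧ δ ≤ dist (b i) (b j) := by
  rw [Real.dist_eq, Real.dist_eq]
  have := hlen i hi
  have := hlen j hj
  rcases h.le_or_le hi hj hij with hle | hle <;>
    exact ⟨le_abs.2 (by first | (left; linarith) | (right; linarith)),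
      le_abs.2 (by first | (left; linarith) | (right; linarith))⟩

theorem nonoverlap_consecutive {u e : ℝ} (hu : 0 ≤ u) (he : 0 < e) (h1 : u + m * e ≤ 1) :
    Nonoverlap m (fun i => u + i * e) (fun i => u + (i + 1) * e) := by
  refine ⟨fun i hi => ⟨by positivity, by linarith, ?_⟩, fun i _ j _ hij => ?_⟩
  · have : ((i : ℝ) + 1) ≤ m := by exact_mod_cast hi
    nlinarith
  · rw [← Set.disjoint_iff_inter_eq_empty]
    rcases Nat.lt_or_gt_of_ne hij with hlt | hlt
    · have : ((i : ℝ) + 1) ≤ j := by exact_mod_cast hlt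
      exact Set.disjoint_left.2 fun x hx hx' => by nlinarith [hx.2, hx'.1]
    · have : ((j : ℝ) + 1) ≤ i := by exact_mod_cast hlt
      exact Set.disjoint_left.2 fun x hx hx' => by nlinarith [hx.1, hx'.2]

end Nonoverlap

theorem natCast_mul_inv_two_pow_le_one (k : ℕ) : (k : ℝ) * 2⁻¹ ^ k ≤ 1 := by
  rw [inv_pow, ← div_eq_mul_inv, div_le_one (by positivity)]
  exact_mod_cast Nat.lt_two_pow_self.le

theorem natCast_mul_inv_two_pow_add_le (a k : ℕ) : (k : ℝ) * 2⁻¹ ^ (a + k) ≤ 2⁻¹ ^ a := by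
  rw [pow_add, mul_left_comm]
  exact mul_le_of_le_one_right (by positivity) (natCast_mul_inv_two_pow_le_one k)

section Spike

variable (r c : ℕ → ℕ)

noncomputable def site (n j : ℕ) : ℝ := 2⁻¹ ^ (n + 1) + (j + 1) * 2⁻¹ ^ (r n + c n)

def IsSite (n : ℕ) (x : ℝ) : Prop := ∃ j < c n, site r c n j = x

open Classical in
noncomputable def spike (x : ℝ) : ℝ :=
  if h : ∃ n, IsSite r c n x then 2⁻¹ ^ (Nat.find h + 1) else 0

noncomputable def spikeFun (x y : ℝ) : ℝ :=
  if Int.fract x = Int.fract y then spike r c (Int.fract x) else 0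

variable {r c} {n : ℕ} {x : ℝ}

theorem site_mem_Ioc {j : ℕ} (hj : j < c n) :
    site r c n j ∈ Set.Ioc (2⁻¹ ^ (n + 1)) (2⁻¹ ^ (n + 1) + 2⁻¹ ^ r n) := by
  have : (0 : ℝ) < (j + 1) * 2⁻¹ ^ (r n + c n) := by positivity
  refine ⟨by unfold site; linarith, ?_⟩
  have hj' : (j : ℝ) + 1 ≤ c n := by exact_mod_cast hj
  have : (j + 1) * (2⁻¹ : ℝ) ^ (r n + c n) ≤ 2⁻¹ ^ r n :=
    le_trans (by gcongr) (natCast_mul_inv_two_pow_add_le (r n) (c n))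
  unfold site
  linarith

theorem IsSite.mem_Ioc (hr : n + 2 ≤ r n) (h : IsSite r c n x) :
    x ∈ Set.Ioc (2⁻¹ ^ (n + 1)) (2⁻¹ ^ (n + 1) + 2⁻¹ ^ (n + 2)) := by
  obtain ⟨j, hj, rfl⟩ := h
  obtain ⟨h₁, h₂⟩ := site_mem_Ioc (r := r) hj
  have : (2⁻¹ : ℝ) ^ r n ≤ 2⁻¹ ^ (n + 2) := pow_le_pow_of_le_one (by norm_num) (by norm_num) hr
  exact ⟨h₁, by linarith⟩

theorem IsSite.mem_Ioo (hr : n + 2 ≤ r n) (h : IsSite r c n x) : x ∈ Set.Ioo 0 1 := by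
  obtain ⟨h₁, h₂⟩ := h.mem_Ioc hr
  have : (2⁻¹ : ℝ) ^ (n + 1) ≤ 2⁻¹ := pow_le_of_le_one (by norm_num) (by norm_num) (by omega)
  have : (2⁻¹ : ℝ) ^ (n + 2) ≤ 2⁻¹ ^ 2 :=
    pow_le_pow_of_le_one (by norm_num) (by norm_num) (by omega)
  exact ⟨lt_trans (by positivity) h₁, by linarith⟩

theorem IsSite.dist_lt (h : IsSite r c n x) {x' : ℝ} (h' : IsSite r c n x') :
    dist x x' < 2⁻¹ ^ r n := by
  obtain ⟨j, hj, rfl⟩ := h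
  obtain ⟨j', hj', rfl⟩ := h'
  obtain ⟨h₁, h₂⟩ := site_mem_Ioc (r := r) hj
  obtain ⟨h₁', h₂'⟩ := site_mem_Ioc (r := r) hj'
  rw [Real.dist_eq, abs_lt]
  constructor <;> linarith

/-- The clusters of different levels lie in the disjoint intervals
`(2^-(n+1), 2^-(n+1) + 2^-(n+2)]`. -/
theorem IsSite.unique (hr : ∀ n, n + 2 ≤ r n) {n' : ℕ} (h : IsSite r c n x)
    (h' : IsSite r c n' x) : n = n' := by
  wlog hle : n ≤ n' generalizing n n'
  · exact (this h' h (by omega)).symm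
  refine hle.eq_or_lt.resolve_right fun hlt => ?_
  obtain ⟨h₁, -⟩ := h.mem_Ioc (hr n)
  obtain ⟨-, h₂⟩ := h'.mem_Ioc (hr n')
  have : (2⁻¹ : ℝ) ^ (n' + 1) ≤ 2⁻¹ ^ (n + 2) :=
    pow_le_pow_of_le_one (by norm_num) (by norm_num) (by omega)
  have : (2⁻¹ : ℝ) ^ (n' + 2) ≤ 2⁻¹ ^ (n + 2) :=
    pow_le_pow_of_le_one (by norm_num) (by norm_num) (by omega)
  have : (2⁻¹ : ℝ) ^ (n + 2) + 2⁻¹ ^ (n + 2) = 2⁻¹ ^ (n + 1) := by ring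
  linarith

open Classical in
theorem spike_eq (hr : ∀ n, n + 2 ≤ r n) (h : IsSite r c n x) :
    spike r c x = 2⁻¹ ^ (n + 1) := by
  have hex : ∃ n, IsSite r c n x := ⟨n, h⟩
  rw [spike, dif_pos hex, IsSite.unique hr (Nat.find_spec hex) h]

theorem spike_eq_zero (h : ∀ n, ¬IsSite r c n x) : spike r c x = 0 := by
  rw [spike, dif_neg (not_exists.2 h)]

theorem spike_nonneg (x : ℝ) : 0 ≤ spike r c x := by
  unfold spike
  split <;> positivity

theorem spike_fract (hr : ∀ n, n + 2 ≤ r n) {t : ℝ} (ht : t ∈ Set.Icc 0 1) :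
    spike r c (Int.fract t) = spike r c t := by
  rcases ht.2.lt_or_eq with ht1 | rfl
  · rw [Int.fract_eq_self.2 ⟨ht.1, ht1⟩]
  · rw [Int.fract_one, spike_eq_zero fun n h => (h.mem_Ioo (hr n)).1.ne rfl,
      spike_eq_zero fun n h => (h.mem_Ioo (hr n)).2.ne rfl]

end Spike

section Counting

open Classical

variable {r c : ℕ → ℕ} {ι : Type*} {s : Finset ι} {x : ι → ℝ} {δ : ℝ}

theorem card_filter_isSite_le_one {n : ℕ}
    (hsep : (s : Set ι).Pairwise fun i j => δ ≤ dist (x i) (x j)) (hδ : 2⁻¹ ^ r n ≤ δ) :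
    #{i ∈ s | IsSite r c n (x i)} ≤ 1 := by
  refine card_le_one.2 fun i hi j hj => by_contra fun hij => ?_
  rw [mem_filter] at hi hj
  exact (hsep hi.1 hj.1 hij).not_gt ((hi.2.dist_lt hj.2).trans_le hδ)

theorem card_filter_isSite_le {n : ℕ}
    (hsep : (s : Set ι).Pairwise fun i j => δ ≤ dist (x i) (x j)) (hδ : 0 < δ) :
    #{i ∈ s | IsSite r c n (x i)} ≤ c n := by
  calc #{i ∈ s | IsSite r c n (x i)} ≤ #((range (c n)).image (site r c n)) := by
        refine card_le_card_of_injOn x (fun i hi => ?_)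
          fun i hi j hj hxij => by_contra fun hij => ?_
        · obtain ⟨j, hj, hji⟩ := (mem_filter.1 hi).2
          exact mem_image.2 ⟨j, mem_range.2 hj, hji⟩
        · have : δ ≤ dist (x i) (x j) := hsep (mem_filter.1 hi).1 (mem_filter.1 hj).1 hij
          rw [hxij, dist_self] at this
          linarith
    _ ≤ c n := card_image_le.trans (card_range _).le

theorem card_filter_isSite_mul_rpow_le {n : ℕ} {q : ℝ} (hq : 1 ≤ q)
    (hsep : (s : Set ι).Pairwise fun i j => δ ≤ dist (x i) (x j)) (hδ : 0 < δ)
    (hscale : 2⁻¹ ^ r n ≤ δ ∨ (c n : ℝ) + 1 ≤ q) :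
    #{i ∈ s | IsSite r c n (x i)} * ((2⁻¹ : ℝ) ^ (n + 1)) ^ q ≤ 2⁻¹ ^ (n + 1) := by
  set h : ℝ := 2⁻¹ ^ (n + 1)
  have h0 : 0 < h := by positivity
  have h1 : h ≤ 2⁻¹ := pow_le_of_le_one (by norm_num) (by norm_num) (by omega)
  rcases hscale with hscale | hscale
  · have hcard : (#{i ∈ s | IsSite r c n (x i)} : ℝ) ≤ 1 := by
      exact_mod_cast card_filter_isSite_le_one hsep hscale
    have : h ^ q ≤ h := by
      simpa using Real.rpow_le_rpow_of_exponent_ge h0 (by linarith) hq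
    nlinarith [Real.rpow_nonneg h0.le q]
  · have hcard : (#{i ∈ s | IsSite r c n (x i)} : ℝ) ≤ c n := by
      exact_mod_cast card_filter_isSite_le hsep hδ
    have : h ^ q ≤ h * 2⁻¹ ^ c n :=
      calc h ^ q ≤ h ^ ((c n : ℝ) + 1) :=
            Real.rpow_le_rpow_of_exponent_ge h0 (by linarith) hscale
        _ = h * h ^ c n := by
            rw [← Nat.cast_add_one, Real.rpow_natCast, pow_succ, mul_comm]
        _ ≤ h * 2⁻¹ ^ c n := by gcongr
    calc _ ≤ (c n : ℝ) * (h * 2⁻¹ ^ c n) := by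
          gcongr
      _ = h * (c n * 2⁻¹ ^ c n) := by ring
      _ ≤ h := mul_le_of_le_one_right h0.le (natCast_mul_inv_two_pow_le_one _)

theorem spike_rpow_le_sum_range (hr : ∀ n, n + 2 ≤ r n) {q : ℝ} (hq : q ≠ 0) {N : ℕ} {y : ℝ}
    (hN : ∀ n, IsSite r c n y → n < N) :
    spike r c y ^ q ≤
      ∑ n ∈ range N, if IsSite r c n y then ((2⁻¹ : ℝ) ^ (n + 1)) ^ q else 0 := by
  have hnonneg : ∀ n ∈ range N,
      0 ≤ if IsSite r c n y then ((2⁻¹ : ℝ) ^ (n + 1)) ^ q else 0 := fun n _ => by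
    split <;> positivity
  by_cases hy : ∃ n, IsSite r c n y
  · obtain ⟨n, hn⟩ := hy
    rw [spike_eq hr hn]
    simpa [hn] using single_le_sum hnonneg (mem_range.2 (hN n hn))
  · rw [spike_eq_zero (not_exists.1 hy), Real.zero_rpow hq]
    exact sum_nonneg hnonneg

theorem exists_bound_isSite (hr : ∀ n, n + 2 ≤ r n) (s : Finset ι) (x : ι → ℝ) :
    ∃ N, ∀ i ∈ s, ∀ n, IsSite r c n (x i) → n < N := by
  have (i : ι) : ∃ N, ∀ n, IsSite r c n (x i) → n < N := by
    by_cases h : ∃ n, IsSite r c n (x i)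
    · obtain ⟨n₀, h₀⟩ := h
      exact ⟨n₀ + 1, fun n hn => (IsSite.unique hr hn h₀).le.trans_lt (Nat.lt_succ_self _)⟩
    · exact ⟨0, fun n hn => (h ⟨n, hn⟩).elim⟩
  choose N hN using this
  exact ⟨s.sup N, fun i hi n hn => (hN i n hn).trans_le (le_sup hi)⟩

theorem sum_spike_rpow_le_one (hr : ∀ n, n + 2 ≤ r n) {q : ℝ} (hq : 1 ≤ q)
    (hsep : (s : Set ι).Pairwise fun i j => δ ≤ dist (x i) (x j)) (hδ : 0 < δ)
    (hscale : ∀ n, 2⁻¹ ^ r n ≤ δ ∨ (c n : ℝ) + 1 ≤ q) :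
    ∑ i ∈ s, spike r c (x i) ^ q ≤ 1 := by
  obtain ⟨N, hN⟩ := exists_bound_isSite hr s x
  calc ∑ i ∈ s, spike r c (x i) ^ q
      ≤ ∑ i ∈ s, ∑ n ∈ range N,
          if IsSite r c n (x i) then ((2⁻¹ : ℝ) ^ (n + 1)) ^ q else 0 :=
        sum_le_sum fun i hi => spike_rpow_le_sum_range hr (by linarith) (hN i hi)
    _ = ∑ n ∈ range N, #{i ∈ s | IsSite r c n (x i)} * ((2⁻¹ : ℝ) ^ (n + 1)) ^ q := by
        rw [sum_comm]
        simp only [sum_ite, sum_const_zero, add_zero, sum_const, nsmul_eq_mul]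
    _ ≤ ∑ n ∈ range N, (2⁻¹ : ℝ) ^ (n + 1) :=
        sum_le_sum fun n _ => card_filter_isSite_mul_rpow_le hq hsep hδ (hscale n)
    _ = 2⁻¹ * ∑ n ∈ range N, (1 / 2 : ℝ) ^ n := by
        rw [mul_sum]
        simp only [pow_succ', one_div]
    _ ≤ 1 := by linarith [sum_geometric_two_le N]

end Counting

theorem abs_sub_rpow_le_rpow_add_rpow {u v q : ℝ} (hu : 0 ≤ u) (hv : 0 ≤ v) (hq : 0 ≤ q) :
    |u - v| ^ q ≤ u ^ q + v ^ q := by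
  rcases le_total u v with huv | huv
  · rw [abs_sub_comm, abs_of_nonneg (by linarith)]
    linarith [Real.rpow_le_rpow (by linarith) (by linarith : v - u ≤ v) hq,
      Real.rpow_nonneg hu q]
  · rw [abs_of_nonneg (by linarith)]
    linarith [Real.rpow_le_rpow (by linarith) (by linarith : u - v ≤ u) hq,
      Real.rpow_nonneg hv q]

section SpikeFun

variable {r c : ℕ → ℕ}

theorem spikeFun_comm (x y : ℝ) : spikeFun r c x y = spikeFun r c y x := by
  unfold spikeFun
  by_cases h : Int.fract x = Int.fract y
  · rw [if_pos h, if_pos h.symm, h]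
  · rw [if_neg h, if_neg (Ne.symm h)]

theorem spikeFun_add_one (x y : ℝ) :
    spikeFun r c (x + 1) y = spikeFun r c x y ∧ spikeFun r c x (y + 1) = spikeFun r c x y := by
  simp only [spikeFun, Int.fract_add_one, and_self]

theorem spikeFun_nonneg (x y : ℝ) : 0 ≤ spikeFun r c x y := by
  unfold spikeFun
  split
  exacts [spike_nonneg _, le_rfl]

theorem spikeFun_le_spike (hr : ∀ n, n + 2 ≤ r n) {x : ℝ} (hx : x ∈ Set.Icc 0 1) (y : ℝ) :
    spikeFun r c x y ≤ spike r c x := by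
  rw [← spike_fract hr hx]
  unfold spikeFun
  split
  exacts [le_rfl, spike_nonneg _]

theorem sum_abs_sub_spikeFun_rpow_le_two (hr : ∀ n, n + 2 ≤ r n) {q δ : ℝ} (hq : 1 ≤ q)
    (hδ : 0 < δ) (hscale : ∀ n, 2⁻¹ ^ r n ≤ δ ∨ (c n : ℝ) + 1 ≤ q)
    {m : ℕ} {a b : ℕ → ℝ} (hno : Nonoverlap m a b) (hlen : ∀ i < m, δ ≤ b i - a i)
    (w : ℕ → ℝ) :
    ∑ i ∈ range m, |spikeFun r c (b i) (w i) - spikeFun r c (a i) (w i)| ^ q ≤ 2 := by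
  have hab (i : ℕ) (hi : i < m) : a i ∈ Set.Icc 0 1 ∧ b i ∈ Set.Icc 0 1 := by
    obtain ⟨h₀, h₁, h₂⟩ := hno.1 i hi
    exact ⟨⟨h₀, by linarith⟩, ⟨by linarith, h₂⟩⟩
  have hsum_le (e : ℕ → ℝ) (he : ∀ i < m, ∀ j < m, i ≠ j → δ ≤ dist (e i) (e j)) :
      ∑ i ∈ range m, spike r c (e i) ^ q ≤ 1 :=
    sum_spike_rpow_le_one hr hq
      (fun i hi j hj hij => he i (by simpa using hi) j (by simpa using hj) hij) hδ hscale
  calc ∑ i ∈ range m, |spikeFun r c (b i) (w i) - spikeFun r c (a i) (w i)| ^ q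
      ≤ ∑ i ∈ range m, (spike r c (b i) ^ q + spike r c (a i) ^ q) := by
        refine sum_le_sum fun i hi => ?_
        have hi := mem_range.1 hi
        refine (abs_sub_rpow_le_rpow_add_rpow (spikeFun_nonneg _ _) (spikeFun_nonneg _ _)
          (by linarith)).trans (add_le_add ?_ ?_) <;>
          refine Real.rpow_le_rpow (spikeFun_nonneg _ _) (spikeFun_le_spike hr ?_ _)
            (by linarith)
        exacts [(hab i hi).2, (hab i hi).1]
    _ ≤ 1 + 1 := by
        rw [sum_add_distrib]
        exact add_le_add (hsum_le b fun i hi j hj hij => (hno.le_dist hlen hi hj hij).2)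
          (hsum_le a fun i hi j hj hij => (hno.le_dist hlen hi hj hij).1)
    _ = 2 := one_add_one_eq_two

theorem bvSharp_spikeFun {p : ℕ → ℝ} (hp1 : ∀ n, 1 ≤ p n) (hpmono : Monotone p)
    (hr : ∀ n, n + 2 ≤ r n) (hpc : ∀ n, (c n : ℝ) + 1 ≤ p (r n)) :
    BVSharp p (spikeFun r c) := by
  have hV (k m : ℕ) (a b w : ℕ → ℝ) (hno : Nonoverlap m a b)
      (hlen : ∀ i < m, 1 / 2 ^ k ≤ b i - a i) :
      (∑ i ∈ range m, |spikeFun r c (b i) (w i) - spikeFun r c (a i) (w i)| ^ p k) ^ (1 / p k)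
        ≤ 2 := by
    have hscale (n : ℕ) : 2⁻¹ ^ r n ≤ (1 / 2 ^ k : ℝ) ∨ (c n : ℝ) + 1 ≤ p k := by
      rcases le_total k (r n) with hk | hk
      · left
        rw [one_div, ← inv_pow]
        exact pow_le_pow_of_le_one (by norm_num) (by norm_num) hk
      · exact .inr ((hpc n).trans (hpmono hk))
    have hsum := sum_abs_sub_spikeFun_rpow_le_two hr (hp1 k) (by positivity) hscale hno hlen w
    calc _ ≤ (2 : ℝ) ^ (1 / p k) :=
          Real.rpow_le_rpow (sum_nonneg fun i _ => by positivity) hsum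
            (by have := hp1 k; positivity)
      _ ≤ 2 ^ (1 : ℝ) := Real.rpow_le_rpow_of_exponent_le (by norm_num)
          ((div_le_one (by linarith [hp1 k])).2 (hp1 k))
      _ = 2 := Real.rpow_one 2
  refine ⟨2, fun k m a b y hno hlen _ => hV k m a b y hno hlen,
    fun k m a b x hno hlen _ => ?_⟩
  simpa only [spikeFun_comm (x _)] using hV k m a b x hno hlen

theorem sum_inv_le_of_lamSharpV1_spikeFun (hr : ∀ n, n + 2 ≤ r n) {lam : ℕ → ℝ} {M : ℝ}
    (h : LamSharpV1 lam (spikeFun r c) M) (n : ℕ) :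
    ∑ j ∈ range (c n), 1 / lam j ≤ 2 ^ (n + 1) * M := by
  set u : ℝ := 2⁻¹ ^ (n + 1)
  set e : ℝ := 2⁻¹ ^ (r n + c n)
  have hsite (j : ℕ) (hj : j < c n) : IsSite r c n (u + (j + 1) * e) := ⟨j, hj, rfl⟩
  have hno : Nonoverlap (c n) (fun j => u + j * e) (fun j => u + (j + 1) * e) := by
    refine nonoverlap_consecutive (by positivity) (by positivity) ?_
    have : u ≤ 2⁻¹ := pow_le_of_le_one (by norm_num) (by norm_num) (by omega)
    have : (2⁻¹ : ℝ) ^ r n ≤ 2⁻¹ ^ 2 :=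
      pow_le_pow_of_le_one (by norm_num) (by norm_num) (by have := hr n; omega)
    have : (c n : ℝ) * e ≤ 2⁻¹ ^ r n := natCast_mul_inv_two_pow_add_le (r n) (c n)
    linarith
  have hterm (j : ℕ) (hj : j < c n) :
      |spikeFun r c (u + (j + 1) * e) (u + (j + 1) * e)
          - spikeFun r c (u + j * e) (u + (j + 1) * e)| / lam j = u * (1 / lam j) := by
    obtain ⟨hb0, hb1⟩ := (hsite j hj).mem_Ioo (hr n)
    have he : 0 < e := by positivity
    have ha0 : 0 ≤ u + j * e := by positivity
    rw [spikeFun, if_pos rfl, Int.fract_eq_self.2 ⟨hb0.le, hb1⟩, spike_eq hr (hsite j hj),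
      spikeFun, if_neg, sub_zero, abs_of_pos (by positivity), mul_one_div]
    rw [Int.fract_eq_self.2 ⟨ha0, by linarith⟩, Int.fract_eq_self.2 ⟨hb0.le, hb1⟩]
    intro h
    linarith
  have := h (c n) _ _ (fun j => u + (j + 1) * e) hno
    fun j hj => Set.Ioo_subset_Icc_self ((hsite j hj).mem_Ioo (hr n))
  rw [sum_congr rfl fun j hj => hterm j (mem_range.1 hj), ← mul_sum] at this
  have hu : (2 : ℝ) ^ (n + 1) * u = 1 := by simp [u]
  calc _ = 2 ^ (n + 1) * (u * ∑ j ∈ range (c n), 1 / lam j) := by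
        rw [← mul_assoc, hu, one_mul]
    _ ≤ 2 ^ (n + 1) * M := by gcongr

end SpikeFun

/-- Corollary: if `BV^{#}(p(n) ↑ ∞) ⊆ Λ^{#}BV` (for 1-periodic
functions), then `∑ 1/λ_n < ∞`. -/
theorem summable_of_bvSharp_subset_lamSharpBV
    (p : ℕ → ℝ) (hp1 : ∀ n, 1 ≤ p n) (hpmono : Monotone p)
    (hptop : Filter.Tendsto p Filter.atTop Filter.atTop)
    (lam : ℕ → ℝ) (hmono : Monotone lam) (hlam1 : 1 < lam 0)
    (hincl : ∀ f : ℝ → ℝ → ℝ,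
      (∀ x y : ℝ, f (x + 1) y = f x y ∧ f x (y + 1) = f x y) →
      BVSharp p f → LamSharpBV lam f) :
    Summable (fun n => 1 / lam n) := by
  by_contra hns
  have hpos (i : ℕ) : 0 ≤ 1 / lam i := one_div_nonneg.2 (by linarith [hmono (Nat.zero_le i)])
  have hdiv := (not_summable_iff_tendsto_nat_atTop_of_nonneg hpos).1 hns
  choose c hc using fun n : ℕ => (hdiv.eventually_ge_atTop (2 ^ (n + 1) * (n + 1))).exists
  choose r hr hpc using fun n : ℕ =>
    ((Filter.eventually_ge_atTop (n + 2)).and (hptop.eventually_ge_atTop ((c n : ℝ) + 1))).exists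
  obtain ⟨M, hM, -⟩ :=
    hincl (spikeFun r c) spikeFun_add_one (bvSharp_spikeFun hp1 hpmono hr hpc)
  obtain ⟨n, hn⟩ := exists_nat_ge M
  have hle := (hc n).trans (sum_inv_le_of_lamSharpV1_spikeFun hr hM n)
  have : (n : ℝ) + 1 ≤ M := le_of_mul_le_mul_left hle (by positivity)
  linarith
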